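/- arXiv:1710.02981 — 2 statements merged into one kernel-verified Lean document; each statement's English description precedes it below -/
import Mathlib

section
/- Let 0 < α ≤ 1 and let T be an absolutely (C,α)-Cesàro bounded operator on a complex Banach space X. Then ‖T^n‖ = o(n^α), i.e. ‖T^n‖/n^α → 0 as n → ∞. -/
open Filter Finset

/-- The Cesàro kernel of order `α`: `k^α(n) = Γ(α+n) / (Γ(α)·Γ(n+1))`. -/
noncomputable def cesKernel (α : ℝ) (n : ℕ) : ℝ :=
  Real.Gamma (α + n) / (Real.Gamma α * Real.Gamma (n + 1))

/-- A bounded linear operator `T` on a complex Banach space is absolutely `(C,α)`-Cesàro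
bounded if there is `C > 0` with
`(1/k^{α+1}(n)) · Σ_{j=0}^n k^α(n-j) ‖T^j x‖ ≤ C ‖x‖` for all `n` and `x`. -/
def AbsCesaroBounded {X : Type*} [NormedAddCommGroup X] [NormedSpace ℂ X]
    (α : ℝ) (T : X →L[ℂ] X) : Prop :=
  ∃ C : ℝ, 0 < C ∧ ∀ (n : ℕ) (x : X),
    (cesKernel (α + 1) n)⁻¹ *
      ∑ j ∈ Finset.range (n + 1), cesKernel α (n - j) * ‖(T ^ j) x‖ ≤ C * ‖x‖

lemma cesKernel_pos {α : ℝ} (hα : 0 < α) (n : ℕ) : 0 < cesKernel α n := by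
  unfold cesKernel
  have h1 : 0 < Real.Gamma (α + n) := Real.Gamma_pos_of_pos (by positivity)
  have h2 : 0 < Real.Gamma α := Real.Gamma_pos_of_pos hα
  have h3 : 0 < Real.Gamma ((n : ℝ) + 1) := Real.Gamma_pos_of_pos (by positivity)
  positivity

lemma cesKernel_zero' {α : ℝ} (hα : 0 < α) : cesKernel α 0 = 1 := by
  simp [cesKernel, Real.Gamma_one, div_self (Real.Gamma_pos_of_pos hα).ne']

lemma cesKernel_succ_order {α : ℝ} (hα : 0 < α) (n : ℕ) :
    cesKernel (α + 1) n = ((α + n) / α) * cesKernel α n := by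
  have h1 : Real.Gamma (α + 1 + n) = (α + n) * Real.Gamma (α + n) := by
    rw [show α + 1 + (n : ℝ) = (α + n) + 1 by ring, Real.Gamma_add_one (by positivity)]
  have h2 : Real.Gamma (α + 1) = α * Real.Gamma α := Real.Gamma_add_one hα.ne'
  have hG : Real.Gamma α ≠ 0 := (Real.Gamma_pos_of_pos hα).ne'
  have hGn : Real.Gamma ((n:ℝ) + 1) ≠ 0 := (Real.Gamma_pos_of_pos (by positivity)).ne'
  unfold cesKernel
  rw [h1, h2]
  field_simp

lemma cesKernel_sum {α : ℝ} (hα : 0 < α) (n : ℕ) :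
    cesKernel (α + 1) n = ∑ i ∈ range (n + 1), cesKernel α i := by
  induction n with
  | zero => simp [cesKernel_zero' hα, cesKernel_zero' (by positivity : (0:ℝ) < α + 1)]
  | succ n ih =>
    rw [Finset.sum_range_succ, ← ih]
    have h1 : Real.Gamma (α + 1 + (n + 1 : ℕ)) = (α + n + 1) * Real.Gamma (α + 1 + n) := by
      push_cast
      rw [show α + 1 + ((n : ℝ) + 1) = (α + 1 + n) + 1 by ring,
        Real.Gamma_add_one (by positivity)]
      ring_nf
    have h2 : Real.Gamma (((n:ℕ) + 1 : ℕ) + 1 : ℝ) = ((n:ℝ) + 1) * Real.Gamma ((n:ℝ) + 1) := by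
      push_cast
      rw [show (n : ℝ) + 1 + 1 = ((n:ℝ) + 1) + 1 by ring, Real.Gamma_add_one (by positivity)]
    have h3 : Real.Gamma (α + ((n:ℕ) + 1 : ℕ)) = (α + n) * Real.Gamma (α + n) := by
      push_cast
      rw [show α + ((n : ℝ) + 1) = (α + n) + 1 by ring, Real.Gamma_add_one (by positivity)]
    have h4 : Real.Gamma (α + 1 + n) = (α + n) * Real.Gamma (α + n) := by
      rw [show α + 1 + (n : ℝ) = (α + n) + 1 by ring, Real.Gamma_add_one (by positivity)]
    have hG : Real.Gamma α ≠ 0 := (Real.Gamma_pos_of_pos hα).ne'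
    have hG1 : Real.Gamma (α + 1) ≠ 0 := (Real.Gamma_pos_of_pos (by positivity)).ne'
    have hGn : Real.Gamma ((n:ℝ) + 1) ≠ 0 := (Real.Gamma_pos_of_pos (by positivity)).ne'
    unfold cesKernel
    push_cast at h1 h2 h3 ⊢
    rw [h1, h2, h3, h4, Real.Gamma_add_one hα.ne']
    field_simp
    ring

lemma gamma_add_alpha_le {α x : ℝ} (hα0 : 0 ≤ α) (hα1 : α ≤ 1) (hx : 0 < x) :
    Real.Gamma (x + α) ≤ x ^ α * Real.Gamma x := by
  have hc := Real.convexOn_log_Gamma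
  have h := hc.2 (Set.mem_Ioi.2 hx) (Set.mem_Ioi.2 (by linarith : (0:ℝ) < x + 1))
    (by linarith : (0:ℝ) ≤ 1 - α) hα0 (by ring)
  simp only [smul_eq_mul, Function.comp] at h
  rw [show (1-α)*x + α*(x+1) = x + α by ring] at h
  rw [Real.Gamma_add_one hx.ne', Real.log_mul hx.ne' (Real.Gamma_pos_of_pos hx).ne'] at h
  have h2 : Real.log (Real.Gamma (x+α)) ≤ α * Real.log x + Real.log (Real.Gamma x) := by
    nlinarith [h]
  calc Real.Gamma (x+α)
      = Real.exp (Real.log (Real.Gamma (x+α))) :=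
        (Real.exp_log (Real.Gamma_pos_of_pos (by linarith))).symm
    _ ≤ Real.exp (α * Real.log x + Real.log (Real.Gamma x)) := Real.exp_le_exp.2 h2
    _ = x ^ α * Real.Gamma x := by
        rw [Real.exp_add, Real.exp_log (Real.Gamma_pos_of_pos hx),
          Real.rpow_def_of_pos hx, mul_comm α]

lemma cesKernel_upper {α : ℝ} (hα0 : 0 < α) (hα1 : α ≤ 1) (n : ℕ) :
    cesKernel (α + 1) n ≤ ((n : ℝ) + 1) ^ α / Real.Gamma (α + 1) := by
  have hx : (0:ℝ) < (n:ℝ) + 1 := by positivity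
  have h := gamma_add_alpha_le hα0.le hα1 hx
  have hGn : 0 < Real.Gamma ((n:ℝ) + 1) := Real.Gamma_pos_of_pos hx
  have hG1 : 0 < Real.Gamma (α + 1) := Real.Gamma_pos_of_pos (by linarith)
  unfold cesKernel
  rw [show α + 1 + (n:ℝ) = ((n:ℝ) + 1) + α by ring, div_le_div_iff₀ (by positivity) hG1]
  calc Real.Gamma ((n:ℝ) + 1 + α) * Real.Gamma (α + 1)
      ≤ (((n:ℝ)+1) ^ α * Real.Gamma ((n:ℝ)+1)) * Real.Gamma (α + 1) := by
        exact mul_le_mul_of_nonneg_right h hG1.le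
    _ = ((n:ℝ) + 1) ^ α * (Real.Gamma (α + 1) * Real.Gamma ((n:ℝ) + 1)) := by ring

theorem stmt5' {X : Type*} [NormedAddCommGroup X] [NormedSpace ℂ X] [CompleteSpace X]
    (α : ℝ) (hα0 : 0 < α) (hα1 : α ≤ 1) (T : X →L[ℂ] X)
    (hT : ∃ C : ℝ, 0 < C ∧ ∀ (n : ℕ) (x : X),
      (cesKernel (α + 1) n)⁻¹ *
        ∑ j ∈ Finset.range (n + 1), cesKernel α (n - j) * ‖(T ^ j) x‖ ≤ C * ‖x‖) :
    Tendsto (fun n : ℕ => ‖T ^ n‖ / (n : ℝ) ^ α) atTop (nhds 0) := by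
  obtain ⟨C, hC, hbd⟩ := hT
  by_cases hz : ∃ m, T ^ m = 0
  · obtain ⟨m, hm⟩ := hz
    apply Tendsto.congr' _ (tendsto_const_nhds (x := (0:ℝ)))
    filter_upwards [eventually_ge_atTop m] with n hn
    have hTn : T ^ n = 0 := by rw [← pow_sub_mul_pow T hn, hm, mul_zero]
    simp [hTn]
  push_neg at hz
  have hbpos : ∀ m : ℕ, 0 < ‖T ^ m‖ := fun m => norm_pos_iff.2 (hz m)
  have hα1' : (0:ℝ) < α + 1 := by linarith
  -- rearranged hypothesis
  have key : ∀ (n : ℕ) (x : X),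
      ∑ j ∈ Finset.range (n+1), cesKernel α (n - j) * ‖(T ^ j) x‖
        ≤ C * cesKernel (α+1) n * ‖x‖ := by
    intro n x
    have hk := cesKernel_pos hα1' n
    have h2 := (inv_mul_le_iff₀ hk).1 (hbd n x)
    calc ∑ j ∈ Finset.range (n+1), cesKernel α (n - j) * ‖(T ^ j) x‖
        ≤ cesKernel (α+1) n * (C * ‖x‖) := h2
      _ = C * cesKernel (α+1) n * ‖x‖ := by ring
  -- big-O bound
  have hbig : ∀ n : ℕ, ‖T ^ n‖ ≤ C * cesKernel (α+1) n := by
    intro n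
    have hk := cesKernel_pos hα1' n
    apply ContinuousLinearMap.opNorm_le_bound _ (by positivity)
    intro x
    have hle : cesKernel α (n-n) * ‖(T ^ n) x‖
        ≤ ∑ j ∈ Finset.range (n+1), cesKernel α (n - j) * ‖(T ^ j) x‖ := by
      apply Finset.single_le_sum (f := fun j => cesKernel α (n - j) * ‖(T ^ j) x‖)
      · intro i _
        exact mul_nonneg (cesKernel_pos hα0 _).le (norm_nonneg _)
      · exact Finset.self_mem_range_succ n
    rw [Nat.sub_self, cesKernel_zero' hα0, one_mul] at hle
    exact hle.trans (key n x)
  -- the weight sum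
  set S : ℕ → ℝ := fun n => ∑ i ∈ Finset.range (n+1), cesKernel α i / ‖T ^ i‖ with hS
  have hSpos : ∀ n, 0 < S n := by
    intro n
    apply Finset.sum_pos
    · intro i _
      exact div_pos (cesKernel_pos hα0 i) (hbpos i)
    · exact Finset.nonempty_range_add_one
  -- key inequality
  have hkeyS : ∀ n : ℕ, ‖T ^ n‖ * S n ≤ C * cesKernel (α+1) n := by
    intro n
    have hk := cesKernel_pos hα1' n
    have hx : ∀ x : X, ‖(T ^ n) x‖ ≤ (C * cesKernel (α+1) n / S n) * ‖x‖ := by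
      intro x
      rw [div_mul_eq_mul_div, le_div_iff₀ (hSpos n)]
      have e1 : ‖(T ^ n) x‖ * S n
          = ∑ i ∈ Finset.range (n+1), cesKernel α i / ‖T ^ i‖ * ‖(T ^ n) x‖ := by
        simp only [hS]
        rw [Finset.mul_sum]
        exact Finset.sum_congr rfl (fun i _ => mul_comm _ _)
      have e2 : ∑ i ∈ Finset.range (n+1), cesKernel α i / ‖T ^ i‖ * ‖(T ^ n) x‖
          = ∑ j ∈ Finset.range (n+1), cesKernel α (n-j) / ‖T ^ (n-j)‖ * ‖(T ^ n) x‖ := by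
        rw [← Finset.sum_range_reflect]
        exact Finset.sum_congr rfl (fun j hj => by norm_num)
      rw [e1, e2]
      refine le_trans (Finset.sum_le_sum ?_) (key n x)
      intro j hj
      have hjn : j ≤ n := Nat.lt_succ_iff.1 (Finset.mem_range.1 hj)
      have hsub : ‖(T ^ n) x‖ ≤ ‖T ^ (n-j)‖ * ‖(T ^ j) x‖ := by
        have : (T ^ n) x = (T ^ (n-j)) ((T ^ j) x) := by
          rw [← ContinuousLinearMap.mul_apply, pow_sub_mul_pow T hjn]
        rw [this]
        exact ContinuousLinearMap.le_opNorm _ _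
      have hb := hbpos (n-j)
      have hkj := (cesKernel_pos hα0 (n-j)).le
      rw [div_mul_eq_mul_div, div_le_iff₀ hb]
      nlinarith [hsub]
    have := ContinuousLinearMap.opNorm_le_bound (T ^ n)
      (div_nonneg (by positivity) (hSpos n).le) hx
    calc ‖T ^ n‖ * S n ≤ (C * cesKernel (α+1) n / S n) * S n :=
          mul_le_mul_of_nonneg_right this (hSpos n).le
      _ = C * cesKernel (α+1) n := by
          rw [div_mul_eq_mul_div, mul_div_assoc, div_self (hSpos n).ne', mul_one]
  -- lower bound for S
  have hSlow : ∀ n : ℕ, (α / C) * ∑ i ∈ Finset.range (n+1), 1/((i:ℝ)+1) ≤ S n := by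
    intro n
    rw [Finset.mul_sum]
    apply Finset.sum_le_sum
    intro i _
    have hb := hbpos i
    have hki := cesKernel_pos hα0 i
    have h1 : ‖T ^ i‖ ≤ C * (((α + i) / α) * cesKernel α i) := by
      have := hbig i
      rwa [cesKernel_succ_order hα0 i] at this
    rw [mul_one_div, div_le_div_iff₀ (by positivity) hb]
    have hia : α + (i:ℝ) ≤ (i:ℝ) + 1 := by
      have : (0:ℝ) ≤ (i:ℝ) := Nat.cast_nonneg i
      linarith
    have h2 : α * ‖T ^ i‖ ≤ C * (α + i) * cesKernel α i := by
      have := mul_le_mul_of_nonneg_left h1 hα0.le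
      calc α * ‖T ^ i‖ ≤ α * (C * (((α + i) / α) * cesKernel α i)) := this
        _ = C * (α + i) * cesKernel α i := by field_simp
    have h3 : α * ‖T ^ i‖ ≤ C * ((i:ℝ)+1) * cesKernel α i := by
      nlinarith [h2, mul_nonneg (mul_nonneg hC.le hki.le) (by linarith : (0:ℝ) ≤ 1 - α)]
    rw [div_mul_eq_mul_div, div_le_iff₀ hC]
    nlinarith [h3]
  -- S tends to infinity
  have hStop : Tendsto S atTop atTop := by
    apply tendsto_atTop_mono hSlow
    apply Tendsto.const_mul_atTop (by positivity : (0:ℝ) < α / C)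
    exact Real.tendsto_sum_range_one_div_nat_succ_atTop.comp (tendsto_add_atTop_nat 1)
  -- the majorant tends to 0
  have hG1 : 0 < Real.Gamma (α + 1) := Real.Gamma_pos_of_pos hα1'
  have hmaj : Tendsto (fun n => 2*C/Real.Gamma (α+1) * (S n)⁻¹) atTop (nhds 0) := by
    have := hStop.inv_tendsto_atTop
    simpa using this.const_mul (2*C/Real.Gamma (α+1))
  -- squeeze
  apply squeeze_zero' (f := fun n : ℕ => ‖T ^ n‖ / (n:ℝ)^α)
    (g := fun n => 2*C/Real.Gamma (α+1) * (S n)⁻¹) ?_ ?_ hmaj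
  · filter_upwards with n
    positivity
  · filter_upwards [eventually_ge_atTop 1] with n hn
    have hn1 : (1:ℝ) ≤ (n:ℝ) := by exact_mod_cast hn
    have hP : (0:ℝ) < (n:ℝ)^α := Real.rpow_pos_of_pos (by linarith) α
    have hk := cesKernel_pos hα1' n
    have hSn := hSpos n
    -- kernel ≤ 2 n^α / Γ(α+1)
    have h2' : Real.Gamma (α+1) * cesKernel (α+1) n ≤ 2 * (n:ℝ)^α := by
      have hup := cesKernel_upper hα0 hα1 n
      have hkle : cesKernel (α+1) n * Real.Gamma (α+1) ≤ ((n:ℝ)+1)^α := by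
        rw [← le_div_iff₀ hG1]
        exact hup
      have hpow : ((n:ℝ)+1)^α ≤ 2 * (n:ℝ)^α := by
        calc ((n:ℝ)+1)^α ≤ (2*(n:ℝ))^α := by
              apply Real.rpow_le_rpow (by linarith) (by linarith) hα0.le
          _ = 2^α * (n:ℝ)^α := Real.mul_rpow (by norm_num) (by linarith)
          _ ≤ 2 * (n:ℝ)^α := by
              apply mul_le_mul_of_nonneg_right _ hP.le
              calc (2:ℝ)^α ≤ (2:ℝ)^(1:ℝ) :=
                    Real.rpow_le_rpow_of_exponent_le (by norm_num) hα1
                _ = 2 := Real.rpow_one 2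
      linarith [hkle, hpow]
    rw [div_le_iff₀ hP]
    have h1 := hkeyS n
    have e : 2*C/Real.Gamma (α+1) * (S n)⁻¹ * (n:ℝ)^α
        = (2*C*(n:ℝ)^α) / (Real.Gamma (α+1) * S n) := by
      field_simp
    rw [e, le_div_iff₀ (mul_pos hG1 hSn)]
    nlinarith [mul_le_mul_of_nonneg_left h1 hG1.le,
      mul_le_mul_of_nonneg_left h2' hC.le, hSn.le, (norm_nonneg (T^n))]

/-- If `0 < α ≤ 1` and `T` is absolutely `(C,α)`-Cesàro bounded on a complex Banach space,
then `‖T^n‖ = o(n^α)`. -/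
theorem stmt5 {X : Type*} [NormedAddCommGroup X] [NormedSpace ℂ X] [CompleteSpace X]
    (α : ℝ) (hα0 : 0 < α) (hα1 : α ≤ 1) (T : X →L[ℂ] X)
    (hT : AbsCesaroBounded α T) :
    Tendsto (fun n : ℕ => ‖T ^ n‖ / (n : ℝ) ^ α) atTop (nhds 0) := by
  exact stmt5' α hα0 hα1 T hT
end

section
/- Let α > 1 and let T be an absolutely (C,α)-Cesàro bounded operator on a complex Banach space X. Then T is Kreiss bounded, i.e. there exists a constant C > 0 such that ‖(λ − T)^{-1}‖ ≤ C/(|λ| − 1) for all complex λ with |λ| > 1. -/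
open Filter Topology
open scoped ENNReal

lemma cesKernel_pos_s7 {β : ℝ} (hβ : 0 < β) (n : ℕ) : 0 < cesKernel β n := by
  unfold cesKernel
  have h1 : (0:ℝ) < β + n := by positivity
  have h2 : (0:ℝ) < (n:ℝ) + 1 := by positivity
  exact div_pos (Real.Gamma_pos_of_pos h1)
    (mul_pos (Real.Gamma_pos_of_pos hβ) (Real.Gamma_pos_of_pos h2))

lemma cesKernel_zero {β : ℝ} (hβ : 0 < β) : cesKernel β 0 = 1 := by
  unfold cesKernel
  simp [Real.Gamma_one, div_self (Real.Gamma_pos_of_pos hβ).ne']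

lemma cesKernel_succ {β : ℝ} (hβ : 0 < β) (n : ℕ) :
    cesKernel β (n + 1) = cesKernel β n * ((β + n) / (n + 1)) := by
  unfold cesKernel
  push_cast
  have h1 : β + ((n:ℝ) + 1) = (β + n) + 1 := by ring
  have h2 : ((n:ℝ) + 1) + 1 = ((n:ℝ) + 1) + 1 := rfl
  rw [h1, Real.Gamma_add_one (by positivity : (β + (n:ℝ)) ≠ 0),
    show ((n:ℝ) + 1 + 1) = ((n:ℝ) + 1) + 1 from rfl,
    Real.Gamma_add_one (by positivity : ((n:ℝ) + 1) ≠ 0)]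
  have hΓβ : Real.Gamma β ≠ 0 := (Real.Gamma_pos_of_pos hβ).ne'
  have hΓn : Real.Gamma ((n:ℝ) + 1) ≠ 0 :=
    (Real.Gamma_pos_of_pos (by positivity)).ne'
  have hn1 : ((n:ℝ) + 1) ≠ 0 := by positivity
  field_simp

lemma cesKernel_shift {β : ℝ} (hβ : 0 < β) (n : ℕ) :
    cesKernel β (n + 1) = cesKernel (β + 1) n * (β / (n + 1)) := by
  unfold cesKernel
  push_cast
  rw [show β + ((n:ℝ) + 1) = (β + 1) + n by ring,
    Real.Gamma_add_one (hβ.ne'),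
    show ((n:ℝ) + 1 + 1) = ((n:ℝ) + 1) + 1 from rfl,
    Real.Gamma_add_one (by positivity : ((n:ℝ) + 1) ≠ 0)]
  have hΓβ : Real.Gamma β ≠ 0 := (Real.Gamma_pos_of_pos hβ).ne'
  have hΓn : Real.Gamma ((n:ℝ) + 1) ≠ 0 :=
    (Real.Gamma_pos_of_pos (by positivity)).ne'
  have hn1 : ((n:ℝ) + 1) ≠ 0 := by positivity
  have hβ' : β ≠ 0 := hβ.ne'
  field_simp

lemma cesKernel_pascal {β : ℝ} (hβ : 0 < β) (n : ℕ) :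
    cesKernel (β + 1) (n + 1) = cesKernel (β + 1) n + cesKernel β (n + 1) := by
  rw [cesKernel_succ (by positivity) n, cesKernel_shift hβ n]
  have hn1 : ((n:ℝ) + 1) ≠ 0 := by positivity
  field_simp
  ring

lemma summable_cesKernel {β t : ℝ} (hβ : 0 < β) (ht0 : 0 < t) (ht1 : t < 1) :
    Summable (fun n : ℕ => cesKernel β n * t ^ n) := by
  have hpos : ∀ n : ℕ, 0 < cesKernel β n * t ^ n := fun n =>
    mul_pos (cesKernel_pos_s7 hβ n) (pow_pos ht0 n)
  refine summable_of_ratio_test_tendsto_lt_one ht1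
    (Eventually.of_forall fun n => (hpos n).ne') ?_
  have hratio : ∀ n : ℕ,
      ‖cesKernel β (n + 1) * t ^ (n + 1)‖ / ‖cesKernel β n * t ^ n‖
        = ((β - 1) / ((n:ℝ) + 1) + 1) * t := by
    intro n
    rw [Real.norm_eq_abs, Real.norm_eq_abs, abs_of_pos (hpos (n + 1)), abs_of_pos (hpos n),
      cesKernel_succ hβ n]
    have h1 : cesKernel β n ≠ 0 := (cesKernel_pos_s7 hβ n).ne'
    have h2 : t ^ n ≠ 0 := (pow_pos ht0 n).ne'
    have hn1 : ((n:ℝ) + 1) ≠ 0 := by positivity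
    rw [pow_succ]
    field_simp
    ring
  simp_rw [hratio]
  have h0 : Tendsto (fun n : ℕ => (β - 1) / ((n:ℝ) + 1) + 1) atTop (𝓝 (0 + 1)) := by
    refine Tendsto.add ?_ tendsto_const_nhds
    have := (tendsto_const_div_atTop_nhds_zero_nat (β - 1)).comp (tendsto_add_atTop_nat 1)
    exact this.congr fun n => by simp [Function.comp]
  have := h0.mul_const t
  simpa using this

lemma hasSum_cesKernel_shift {β t : ℝ} (hβ : 0 < β) (ht0 : 0 < t) (ht1 : t < 1) :
    HasSum (fun n : ℕ => cesKernel β n * t ^ n)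
      ((1 - t) * ∑' n : ℕ, cesKernel (β + 1) n * t ^ n) := by
  set G := ∑' n : ℕ, cesKernel (β + 1) n * t ^ n with hGdef
  have hG : HasSum (fun n : ℕ => cesKernel (β + 1) n * t ^ n) G :=
    (summable_cesKernel (by positivity) ht0 ht1).hasSum
  have hG' : HasSum (fun n : ℕ => cesKernel (β + 1) n * t ^ (n + 1)) (t * G) := by
    have := hG.mul_left t
    refine this.congr_fun fun n => ?_
    rw [pow_succ]; ring
  have hshift : HasSum (fun n : ℕ => cesKernel (β + 1) (n + 1) * t ^ (n + 1)) (G - 1) := by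
    refine (hasSum_nat_add_iff (f := fun n : ℕ => cesKernel (β + 1) n * t ^ n) 1).mpr ?_
    simpa [cesKernel_zero (show (0:ℝ) < β + 1 by positivity)] using hG
  have hsub := hshift.sub hG'
  have hsub' : HasSum (fun n : ℕ => cesKernel β (n + 1) * t ^ (n + 1)) (G - 1 - t * G) := by
    refine hsub.congr_fun fun n => ?_
    rw [cesKernel_pascal hβ n]; ring
  have := (hasSum_nat_add_iff (f := fun n : ℕ => cesKernel β n * t ^ n) 1).mp hsub'
  simp only [Finset.range_one, Finset.sum_singleton, pow_zero, mul_one,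
    cesKernel_zero hβ] at this
  rw [show (1 - t) * G = G - 1 - t * G + 1 by ring]
  exact this

lemma cesaro_key {β : ℝ} (hβ : 0 < β) {t M : ℝ} (ht0 : 0 < t) (ht1 : t < 1)
    (s : ℕ → ℝ) (hs : ∀ j, 0 ≤ s j)
    (hM : ∀ n, ∑ j ∈ Finset.range (n + 1), cesKernel β (n - j) * s j
      ≤ M * cesKernel (β + 1) n) :
    Summable (fun j : ℕ => s j * t ^ j) ∧ ∑' j : ℕ, s j * t ^ j ≤ M / (1 - t) := by
  have hβ1 : (0:ℝ) < β + 1 := by positivity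
  have hsb : ∀ j, s j ≤ M * cesKernel (β + 1) j := by
    intro j
    calc s j = cesKernel β (j - j) * s j := by
          simp [cesKernel_zero hβ]
      _ ≤ ∑ i ∈ Finset.range (j + 1), cesKernel β (j - i) * s i := by
          refine Finset.single_le_sum (f := fun i => cesKernel β (j - i) * s i)
            (fun i _ => mul_nonneg (cesKernel_pos_s7 hβ _).le (hs i)) ?_
          simp
      _ ≤ M * cesKernel (β + 1) j := hM j
  have hM0 : 0 ≤ M := by
    have := (hs 0).trans (hsb 0)
    rw [cesKernel_zero hβ1, mul_one] at this
    exact this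
  have hsum1 : Summable (fun j : ℕ => cesKernel (β + 1) j * t ^ j) :=
    summable_cesKernel hβ1 ht0 ht1
  have hf : Summable (fun j : ℕ => s j * t ^ j) := by
    refine Summable.of_nonneg_of_le (fun j => mul_nonneg (hs j) (pow_pos ht0 j).le)
      (fun j => ?_) (hsum1.mul_left M)
    have : s j * t ^ j ≤ (M * cesKernel (β + 1) j) * t ^ j :=
      mul_le_mul_of_nonneg_right (hsb j) (pow_pos ht0 j).le
    simpa [mul_assoc] using this
  have hg : Summable (fun m : ℕ => cesKernel β m * t ^ m) := summable_cesKernel hβ ht0 ht1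
  have hfn : Summable (fun j : ℕ => ‖s j * t ^ j‖) := by
    rwa [summable_norm_iff]
  have hgn : Summable (fun m : ℕ => ‖cesKernel β m * t ^ m‖) := by
    rwa [summable_norm_iff]
  have hCP := hasSum_sum_range_mul_of_summable_norm hfn hgn
  set F := ∑' j : ℕ, s j * t ^ j with hF
  set G := ∑' m : ℕ, cesKernel β m * t ^ m with hG
  set G' := ∑' n : ℕ, cesKernel (β + 1) n * t ^ n with hG'
  have hterm : ∀ n : ℕ,
      (∑ k ∈ Finset.range (n + 1), (s k * t ^ k) * (cesKernel β (n - k) * t ^ (n - k)))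
        = t ^ n * ∑ j ∈ Finset.range (n + 1), cesKernel β (n - j) * s j := by
    intro n
    rw [Finset.mul_sum]
    refine Finset.sum_congr rfl fun k hk => ?_
    have hk' : k ≤ n := Nat.lt_succ_iff.mp (Finset.mem_range.mp hk)
    have : t ^ k * t ^ (n - k) = t ^ n := by
      rw [← pow_add, Nat.add_sub_cancel' hk']
    calc (s k * t ^ k) * (cesKernel β (n - k) * t ^ (n - k))
        = cesKernel β (n - k) * s k * (t ^ k * t ^ (n - k)) := by ring
      _ = t ^ n * (cesKernel β (n - k) * s k) := by rw [this]; ring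
  have hFG : F * G ≤ M * G' := by
    rw [← hCP.tsum_eq, hG', ← tsum_mul_left]
    refine Summable.tsum_le_tsum (fun n => ?_) hCP.summable (hsum1.mul_left M)
    rw [hterm n]
    calc t ^ n * ∑ j ∈ Finset.range (n + 1), cesKernel β (n - j) * s j
        ≤ t ^ n * (M * cesKernel (β + 1) n) :=
          mul_le_mul_of_nonneg_left (hM n) (pow_pos ht0 n).le
      _ = M * (cesKernel (β + 1) n * t ^ n) := by ring
  have hGshift : G = (1 - t) * G' := (hasSum_cesKernel_shift hβ ht0 ht1).tsum_eq
  have hG'pos : 0 < G' := by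
    refine Summable.tsum_pos hsum1 (fun i => (mul_pos (cesKernel_pos_s7 hβ1 i) (pow_pos ht0 i)).le) 0 ?_
    simpa [cesKernel_zero hβ1] using (mul_pos (cesKernel_pos_s7 hβ1 0) (pow_pos ht0 0))
  have ht1' : (0:ℝ) < 1 - t := by linarith
  refine ⟨hf, ?_⟩
  rw [hGshift] at hFG
  have : F * (1 - t) ≤ M := by
    have := hFG
    rw [show F * ((1 - t) * G') = (F * (1 - t)) * G' by ring] at this
    exact le_of_mul_le_mul_right (by linarith [this]) hG'pos
  rw [le_div_iff₀ ht1']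
  exact this

set_option maxHeartbeats 1000000 in
/-- Let `α > 1` and `T` be absolutely `(C,α)`-Cesàro bounded on a complex Banach space.
Then `T` is Kreiss bounded: there is `C > 0` such that every `λ` with `|λ| > 1` lies in the
resolvent set of `T` and `‖(λ - T)⁻¹‖ ≤ C/(|λ| - 1)`. -/
theorem stmt7 {X : Type*} [NormedAddCommGroup X] [NormedSpace ℂ X] [CompleteSpace X]
    (α : ℝ) (hα : 1 < α) (T : X →L[ℂ] X)
    (hT : AbsCesaroBounded α T) :
    ∃ C : ℝ, 0 < C ∧ ∀ lam : ℂ, 1 < ‖lam‖ →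
      lam ∈ resolventSet ℂ T ∧ ‖Ring.inverse (algebraMap ℂ (X →L[ℂ] X) lam - T)‖ ≤ C / (‖lam‖ - 1) := by
  obtain ⟨C, hC, hbd⟩ := hT
  have hα0 : 0 < α := lt_trans one_pos hα
  have hα1 : (0:ℝ) < α + 1 := by positivity
  refine ⟨C, hC, fun lam hlam => ?_⟩
  have hr1 : 1 < ‖lam‖ := hlam
  have hr0 : 0 < ‖lam‖ := lt_trans one_pos hr1
  have hlam0 : lam ≠ 0 := by
    intro h
    rw [h, norm_zero] at hr1
    linarith
  set r : ℝ := ‖lam‖ with hrdef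
  set t : ℝ := r⁻¹ with htdef
  have ht0 : 0 < t := inv_pos.mpr hr0
  have ht1 : t < 1 := by
    rw [htdef]
    exact inv_lt_one_of_one_lt₀ hr1
  have h1t : (0:ℝ) < 1 - t := by linarith
  have hr1' : (0:ℝ) < r - 1 := by linarith
  -- hypothesis in convenient form
  have hbd' : ∀ (n : ℕ) (x : X),
      ∑ j ∈ Finset.range (n + 1), cesKernel α (n - j) * ‖(T ^ j) x‖
        ≤ (C * ‖x‖) * cesKernel (α + 1) n := by
    intro n x
    have hk := cesKernel_pos_s7 hα1 n
    have h := hbd n x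
    rw [inv_mul_le_iff₀ hk] at h
    calc ∑ j ∈ Finset.range (n + 1), cesKernel α (n - j) * ‖(T ^ j) x‖
        ≤ cesKernel (α + 1) n * (C * ‖x‖) := h
      _ = (C * ‖x‖) * cesKernel (α + 1) n := by ring
  -- operator norm bound
  have hTn : ∀ j : ℕ, ‖T ^ j‖ ≤ C * cesKernel (α + 1) j := by
    intro j
    refine ContinuousLinearMap.opNorm_le_bound _
      (mul_nonneg hC.le (cesKernel_pos_s7 hα1 j).le) fun x => ?_
    have h1 : ‖(T ^ j) x‖ = cesKernel α (j - j) * ‖(T ^ j) x‖ := by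
      simp [cesKernel_zero hα0]
    have h2 : cesKernel α (j - j) * ‖(T ^ j) x‖
        ≤ ∑ i ∈ Finset.range (j + 1), cesKernel α (j - i) * ‖(T ^ i) x‖ := by
      refine Finset.single_le_sum (f := fun i => cesKernel α (j - i) * ‖(T ^ i) x‖)
        (fun i _ => mul_nonneg (cesKernel_pos_s7 hα0 _).le (norm_nonneg _)) ?_
      simp
    calc ‖(T ^ j) x‖ = cesKernel α (j - j) * ‖(T ^ j) x‖ := h1
      _ ≤ ∑ i ∈ Finset.range (j + 1), cesKernel α (j - i) * ‖(T ^ i) x‖ := h2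
      _ ≤ (C * ‖x‖) * cesKernel (α + 1) j := hbd' j x
      _ = C * cesKernel (α + 1) j * ‖x‖ := by ring
  have hsumk : Summable (fun j : ℕ => cesKernel (α + 1) j * t ^ j) :=
    summable_cesKernel hα1 ht0 ht1
  set a : ℕ → (X →L[ℂ] X) := fun j => (lam⁻¹) ^ (j + 1) • (T ^ j) with ha
  set b : ℕ → (X →L[ℂ] X) := fun j => (lam⁻¹) ^ j • (T ^ j) with hb
  have hnlam : ‖lam⁻¹‖ = t := by rw [norm_inv, htdef, hrdef]
  have hna : ∀ j, ‖a j‖ = t ^ (j + 1) * ‖T ^ j‖ := by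
    intro j
    show ‖lam⁻¹ ^ (j + 1) • (T ^ j)‖ = t ^ (j + 1) * ‖T ^ j‖
    rw [norm_smul (lam⁻¹ ^ (j + 1)) (T ^ j), norm_pow, hnlam]
  have hnb : ∀ j, ‖b j‖ = t ^ j * ‖T ^ j‖ := by
    intro j
    show ‖lam⁻¹ ^ j • (T ^ j)‖ = t ^ j * ‖T ^ j‖
    rw [norm_smul (lam⁻¹ ^ j) (T ^ j), norm_pow, hnlam]
  have hsbn : Summable (fun j => ‖b j‖) := by
    refine Summable.of_nonneg_of_le (fun j => norm_nonneg _)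
      (fun j => ?_) (hsumk.mul_left C)
    rw [hnb]
    calc t ^ j * ‖T ^ j‖ ≤ t ^ j * (C * cesKernel (α + 1) j) :=
          mul_le_mul_of_nonneg_left (hTn j) (pow_pos ht0 j).le
      _ = C * (cesKernel (α + 1) j * t ^ j) := by ring
  have hsb : Summable b := hsbn.of_norm
  have hsan : Summable (fun j => ‖a j‖) := by
    refine Summable.of_nonneg_of_le (fun j => norm_nonneg _)
      (fun j => ?_) ((hsumk.mul_left C).mul_left t)
    rw [hna, pow_succ']
    calc t * t ^ j * ‖T ^ j‖ ≤ t * t ^ j * (C * cesKernel (α + 1) j) :=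
          mul_le_mul_of_nonneg_left (hTn j) (by positivity)
      _ = t * (C * (cesKernel (α + 1) j * t ^ j)) := by ring
  have hsa : Summable a := hsan.of_norm
  set R : X →L[ℂ] X := ∑' j, a j with hR
  have hb0 : b 0 = 1 := by simp [hb]
  have hsdiff : Summable (fun j => b j - b (j + 1)) :=
    hsb.sub ((summable_nat_add_iff 1).mpr hsb)
  have hsdiffn : Summable (fun j => ‖b j - b (j + 1)‖) := by
    refine Summable.of_nonneg_of_le (fun j => norm_nonneg _)
      (fun j => norm_sub_le _ _) (hsbn.add ?_)
    exact (summable_nat_add_iff 1).mpr hsbn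
  have htel : HasSum (fun j => b j - b (j + 1)) 1 := by
    rw [hasSum_iff_tendsto_nat_of_summable_norm hsdiffn]
    have heq : ∀ n : ℕ, ∑ i ∈ Finset.range n, (b i - b (i + 1)) = b 0 - b n :=
      fun n => Finset.sum_range_sub' b n
    simp_rw [heq, hb0]
    have h0 : Tendsto b atTop (𝓝 0) := hsb.tendsto_atTop_zero
    have h1 : Tendsto (fun n : ℕ => (1 : X →L[ℂ] X) - b n) atTop (𝓝 (1 - 0)) :=
      tendsto_const_nhds.sub h0
    simpa using h1
  set D := algebraMap ℂ (X →L[ℂ] X) lam - T with hD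
  have halg : algebraMap ℂ (X →L[ℂ] X) lam = lam • (1 : X →L[ℂ] X) :=
    Algebra.algebraMap_eq_smul_one lam
  have hsc1 : ∀ j : ℕ, lam * lam⁻¹ ^ (j + 1) = lam⁻¹ ^ j := by
    intro j
    rw [pow_succ', ← mul_assoc, mul_inv_cancel₀ hlam0, one_mul]
  have hsc2 : ∀ j : ℕ, lam⁻¹ ^ (j + 1) * lam = lam⁻¹ ^ j := by
    intro j
    rw [mul_comm]
    exact hsc1 j
  have hDa : ∀ j, D * a j = b j - b (j + 1) := by
    intro j
    show D * (lam⁻¹ ^ (j + 1) • T ^ j) = lam⁻¹ ^ j • T ^ j - lam⁻¹ ^ (j + 1) • T ^ (j + 1)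
    rw [hD, sub_mul, halg, smul_mul_assoc, one_mul, smul_smul, hsc1 j, mul_smul_comm,
      ← pow_succ']
  have haD : ∀ j, a j * D = b j - b (j + 1) := by
    intro j
    show (lam⁻¹ ^ (j + 1) • T ^ j) * D = lam⁻¹ ^ j • T ^ j - lam⁻¹ ^ (j + 1) • T ^ (j + 1)
    rw [hD, mul_sub, halg, mul_smul_comm, mul_one, smul_smul, hsc1 j, smul_mul_assoc, ← pow_succ]
  have hDR : D * R = 1 := by
    have h1 : HasSum (fun j => D * a j) (D * R) := hsa.hasSum.mul_left D
    have h2 : HasSum (fun j => D * a j) 1 := htel.congr_fun fun j => hDa j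
    exact h1.unique h2
  have hRD : R * D = 1 := by
    have h1 : HasSum (fun j => a j * D) (R * D) := hsa.hasSum.mul_right D
    have h2 : HasSum (fun j => a j * D) 1 := htel.congr_fun fun j => haD j
    exact h1.unique h2
  have hUnit : IsUnit D := ⟨⟨D, R, hDR, hRD⟩, rfl⟩
  refine ⟨spectrum.mem_resolventSet_iff.mpr hUnit, ?_⟩
  have hinv : Ring.inverse D = R := by
    have h : D = ((⟨D, R, hDR, hRD⟩ : (X →L[ℂ] X)ˣ) : X →L[ℂ] X) := rfl
    rw [h, Ring.inverse_unit]
    rfl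
  rw [hinv]
  refine ContinuousLinearMap.opNorm_le_bound _ (by positivity) fun x => ?_
  set s : ℕ → ℝ := fun j => ‖(T ^ j) x‖ with hs
  obtain ⟨hkey1, hkey2⟩ := cesaro_key hα0 ht0 ht1 s (fun j => norm_nonneg _) (hbd' · x)
  have hax : HasSum (fun j => a j x) (R x) :=
    hsa.hasSum.mapL (ContinuousLinearMap.apply ℂ X x)
  have hnax : ∀ j, ‖a j x‖ = t * (s j * t ^ j) := by
    intro j
    rw [ha]
    simp only [ContinuousLinearMap.smul_apply, norm_smul, norm_pow, hnlam, hs]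
    rw [pow_succ']
    ring
  have hnaxs : Summable (fun j => ‖a j x‖) := by
    refine (hkey1.mul_left t).congr fun j => ?_
    rw [hnax]
  have hbound : ∑' j, ‖a j x‖ ≤ C / (r - 1) * ‖x‖ := by
    have h1 : ∑' j, ‖a j x‖ = t * ∑' j, s j * t ^ j := by
      rw [← tsum_mul_left]
      exact tsum_congr hnax
    rw [h1]
    have h2 : t * ∑' j, s j * t ^ j ≤ t * (C * ‖x‖ / (1 - t)) :=
      mul_le_mul_of_nonneg_left hkey2 ht0.le
    refine h2.trans (le_of_eq ?_)
    rw [htdef]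
    have hrne : r ≠ 0 := hr0.ne'
    have h1t' : 1 - r⁻¹ ≠ 0 := by
      rw [← htdef]; exact h1t.ne'
    have hr1ne : r - 1 ≠ 0 := hr1'.ne'
    field_simp
  calc ‖R x‖ = ‖∑' j, a j x‖ := by rw [hax.tsum_eq]
    _ ≤ ∑' j, ‖a j x‖ := norm_tsum_le_tsum_norm hnaxs
    _ ≤ C / (r - 1) * ‖x‖ := hbound
end
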